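/- arXiv:2512.16039 — 8 statements merged into one kernel-verified Lean document; each statement's English description precedes it below -/
import Mathlib

section
/- Let G be a group, φ an automorphism of G, and π : G → G/Z(G) the canonical projection. Then the image π(Fix φ) of the fixed subgroup of φ equals P_φ = {gZ(G) ∈ G/Z(G) | g⁻¹·φ(g) ∈ I_φ}. -/
/-- The subgroup of fixed points of an automorphism `φ` of `G`:
`Fix φ = {g ∈ G | φ(g) = g}`. -/
def fixedSubgroup {G : Type*} [Group G] (φ : G ≃* G) : Subgroup G where
  carrier := {g | φ g = g}
  one_mem' := map_one φ
  mul_mem' := by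
    intro a b ha hb
    simp only [Set.mem_setOf_eq, map_mul] at *
    rw [ha, hb]
  inv_mem' := by
    intro a ha
    simp only [Set.mem_setOf_eq, map_inv] at *
    rw [ha]

lemma center_apply_mem {G : Type*} [Group G] (φ : G ≃* G) {z : G}
    (hz : z ∈ Subgroup.center G) : φ z ∈ Subgroup.center G := by
  rw [Subgroup.mem_center_iff]
  intro g
  calc g * φ z = φ (φ.symm g) * φ z := by rw [MulEquiv.apply_symm_apply]
    _ = φ (φ.symm g * z) := by rw [map_mul]
    _ = φ (z * φ.symm g) := by rw [Subgroup.mem_center_iff.mp hz (φ.symm g)]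
    _ = φ z * φ (φ.symm g) := by rw [map_mul]
    _ = φ z * g := by rw [MulEquiv.apply_symm_apply]

/-- The subgroup `I_φ = {z⁻¹ * φ(z) | z ∈ Z(G)}` of `G` (contained in `Z(G)`). -/
def Iphi {G : Type*} [Group G] (φ : G ≃* G) : Subgroup G where
  carrier := {x | ∃ z ∈ Subgroup.center G, x = z⁻¹ * φ z}
  one_mem' := ⟨1, Subgroup.one_mem _, by simp⟩
  mul_mem' := by
    rintro a b ⟨z₁, hz₁, rfl⟩ ⟨z₂, hz₂, rfl⟩
    refine ⟨z₁ * z₂, mul_mem hz₁ hz₂, ?_⟩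
    have hc : z₂⁻¹ * (z₁⁻¹ * φ z₁) = (z₁⁻¹ * φ z₁) * z₂⁻¹ :=
      Subgroup.mem_center_iff.mp (mul_mem (inv_mem hz₁) (center_apply_mem φ hz₁)) z₂⁻¹
    calc z₁⁻¹ * φ z₁ * (z₂⁻¹ * φ z₂)
        = ((z₁⁻¹ * φ z₁) * z₂⁻¹) * φ z₂ := by simp [mul_assoc]
      _ = (z₂⁻¹ * (z₁⁻¹ * φ z₁)) * φ z₂ := by rw [hc]
      _ = (z₁ * z₂)⁻¹ * φ (z₁ * z₂) := by rw [map_mul, mul_inv_rev]; simp [mul_assoc]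
  inv_mem' := by
    rintro a ⟨z, hz, rfl⟩
    refine ⟨z⁻¹, inv_mem hz, ?_⟩
    have h : Commute z (φ z) := Subgroup.mem_center_iff.mp (center_apply_mem φ hz) z
    rw [mul_inv_rev, inv_inv, map_inv]
    exact h.inv_right.eq.symm

lemma Iphi_le_center {G : Type*} [Group G] (φ : G ≃* G) :
    Iphi φ ≤ Subgroup.center G := by
  rintro x ⟨z, hz, rfl⟩
  exact mul_mem (inv_mem hz) (center_apply_mem φ hz)

/-- The image of `Fix φ` under the canonical projection
`π : G → G/Z(G)` equals `P_φ = {gZ(G) | g⁻¹·φ(g) ∈ I_φ}`. -/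
theorem image_fixedSubgroup_eq_Pphi {G : Type*} [Group G] (φ : G ≃* G) :
    (QuotientGroup.mk '' (fixedSubgroup φ : Set G) :
        Set (G ⧸ Subgroup.center G)) =
      {x : G ⧸ Subgroup.center G |
        ∃ g : G, (QuotientGroup.mk g : G ⧸ Subgroup.center G) = x ∧
          g⁻¹ * φ g ∈ Iphi φ} := by
  ext x
  constructor
  · rintro ⟨g, hg, rfl⟩
    exact ⟨g, rfl, by rw [show φ g = g from hg]; simp [one_mem]⟩
  · rintro ⟨g, rfl, z, hz, hzeq⟩
    refine ⟨g * z⁻¹, ?_, ?_⟩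
    · show φ (g * z⁻¹) = g * z⁻¹
      have : φ g = g * (z⁻¹ * φ z) := by
        rw [← hzeq]; group
      rw [map_mul, map_inv, this]; group
    · exact (QuotientGroup.eq).mpr (by simpa using inv_mem hz)
end

section
/- Let G be a group and φ an automorphism of G of finite order, say φᵐ = id for some m ≥ 1. Then for every gZ(G) ∈ Fix φ̄ one has (g⁻¹·φ(g))ᵐ ∈ I_φ; consequently the image of the homomorphism ε_φ : Fix φ̄ → Z(G)/I_φ, gZ(G) ↦ g⁻¹·φ(g)·I_φ, is an abelian group of exponent dividing m, and if Fix φ̄ is finitely generated then P_φ = ker ε_φ has finite index in Fix φ̄. -/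
/-- `I_φ` viewed as a subgroup of the center `Z(G)`. -/
def IphiZ {G : Type*} [Group G] (φ : G ≃* G) : Subgroup ↥(Subgroup.center G) :=
  (Iphi φ).comap (Subgroup.center G).subtype

/-! With `c = g⁻¹ φ(g)` central, `φᵏ(g) = g · c · φ(c) ⋯ φᵏ⁻¹(c)`, so `φᵐ = id` forces the norm
`c · φ(c) ⋯ φᵐ⁻¹(c)` to be `1`. Modulo `I_φ` the automorphism `φ` acts trivially on `Z(G)`, hence
`cᵐ ≡ c · φ(c) ⋯ φᵐ⁻¹(c) = 1`. So the image of `ε_φ` is an abelian group of exponent dividing `m`;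
when `Fix φ̄` is finitely generated, so is this image, which is then finite. -/

theorem iterate_apply_eq_mul_prod_iterate {G A : Type*} [Group G] [CommGroup A]
    (f : G →* G) (ι : A →* G) (ψ : A →* A) (hψ : Function.Semiconj ι ψ f)
    {g : G} {c : A} (hg : f g = g * ι c) (k : ℕ) :
    f^[k] g = g * ι (∏ i ∈ Finset.range k, ψ^[i] c) := by
  induction k with
  | zero => simp
  | succ k ih =>
    rw [Function.iterate_succ_apply, hg, iterate_map_mul, ih, ← (hψ.iterate_right k).eq,
      Finset.prod_range_succ, map_mul, mul_assoc]

theorem pow_mem_of_prod_iterate_eq_one {A : Type*} [CommGroup A] (ψ : A →* A)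
    {H : Subgroup A} (hH : ∀ z, z⁻¹ * ψ z ∈ H) {c : A} {m : ℕ}
    (hc : ∏ i ∈ Finset.range m, ψ^[i] c = 1) : c ^ m ∈ H := by
  have hmk : ∀ i, (ψ^[i] c : A ⧸ H) = c := by
    intro i
    induction i with
    | zero => rfl
    | succ i ih =>
      rw [Function.iterate_succ_apply', ← ih]
      exact (QuotientGroup.eq.mpr (hH _)).symm
  rw [← QuotientGroup.eq_one_iff]
  calc ((c ^ m : A) : A ⧸ H) = ∏ i ∈ Finset.range m, ((ψ^[i] c : A) : A ⧸ H) := by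
        simp [hmk]
    _ = 1 := by rw [← QuotientGroup.mk_prod, hc, QuotientGroup.mk_one]

theorem MonoidHom.finiteIndex_ker_of_pow_eq_one {H A : Type*} [Group H] [Group.FG H]
    [CommGroup A] (f : H →* A) {m : ℕ} (hm : 0 < m) (hf : ∀ x, f x ^ m = 1) :
    f.ker.FiniteIndex := by
  have : Group.FG f.range := Group.fg_range f
  have : Finite f.range := CommGroup.finite_of_fg_isMulTorsion _ fun ⟨_, x, hx⟩ =>
    isOfFinOrder_iff_pow_eq_one.mpr ⟨m, hm, Subtype.ext (hx ▸ hf x)⟩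
  have : Finite (H ⧸ f.ker) := .of_equiv _ (QuotientGroup.quotientKerEquivRange f).symm.toEquiv
  exact Subgroup.finiteIndex_of_finite_quotient

section

variable {G : Type*} [Group G] (φ : G ≃* G)

open scoped IsMulCommutative in
theorem pow_mem_IphiZ {m : ℕ} (hord : ∀ g : G, (⇑φ)^[m] g = g) {g : G}
    (hg : g⁻¹ * φ g ∈ Subgroup.center G) :
    (⟨g⁻¹ * φ g, hg⟩ : Subgroup.center G) ^ m ∈ IphiZ φ := by
  let ψ : Subgroup.center G →* Subgroup.center G := Subgroup.centerCongr φ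
  refine pow_mem_of_prod_iterate_eq_one ψ (H := IphiZ φ) (fun z => ⟨z, z.2, rfl⟩) ?_
  have hiter := iterate_apply_eq_mul_prod_iterate φ.toMonoidHom (Subgroup.center G).subtype ψ
    (fun _ => rfl) (c := ⟨g⁻¹ * φ g, hg⟩) (mul_inv_cancel_left g (φ g)).symm m
  exact Subtype.ext (left_eq_mul.mp ((hord g).symm.trans hiter))

theorem inv_mul_apply_mem_center_of_mem_fixedSubgroup
    {φbar : (G ⧸ Subgroup.center G) ≃* (G ⧸ Subgroup.center G)}
    (hbar : ∀ g : G, φbar (QuotientGroup.mk g) = QuotientGroup.mk (φ g)) {g : G}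
    (hmem : (QuotientGroup.mk g : G ⧸ Subgroup.center G) ∈ fixedSubgroup φbar) :
    g⁻¹ * φ g ∈ Subgroup.center G :=
  QuotientGroup.eq.mp ((hbar g).symm.trans hmem).symm

end

/-- If `φᵐ = id` with `m ≥ 1`, then for every `gZ(G) ∈ Fix φ̄` one has
`(g⁻¹φ(g))ᵐ ∈ I_φ`; the image of `ε_φ : Fix φ̄ → Z(G)/I_φ` has exponent dividing `m`;
and if `Fix φ̄` is finitely generated then `P_φ = ker ε_φ` has finite index in `Fix φ̄`. -/
theorem finite_order_pow_mem_Iphi {G : Type*} [Group G] (φ : G ≃* G)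
    (m : ℕ) (hm : 1 ≤ m) (hord : ∀ g : G, (⇑φ)^[m] g = g)
    (φbar : (G ⧸ Subgroup.center G) ≃* (G ⧸ Subgroup.center G))
    (hbar : ∀ g : G, φbar (QuotientGroup.mk g) = QuotientGroup.mk (φ g))
    (ε : ↥(fixedSubgroup φbar) →* (↥(Subgroup.center G) ⧸ IphiZ φ))
    (hε : ∀ (g : G) (hg : g⁻¹ * φ g ∈ Subgroup.center G)
        (hmem : (QuotientGroup.mk g : G ⧸ Subgroup.center G) ∈ fixedSubgroup φbar),
        ε ⟨QuotientGroup.mk g, hmem⟩ =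
          QuotientGroup.mk (⟨g⁻¹ * φ g, hg⟩ : ↥(Subgroup.center G))) :
    (∀ g : G, g⁻¹ * φ g ∈ Subgroup.center G → (g⁻¹ * φ g) ^ m ∈ Iphi φ) ∧
    (∀ x : ↥(fixedSubgroup φbar), (ε x) ^ m = 1) ∧
    (Group.FG ↥(fixedSubgroup φbar) → (MonoidHom.ker ε).FiniteIndex) := by
  have hpow : ∀ g : G, g⁻¹ * φ g ∈ Subgroup.center G → (g⁻¹ * φ g) ^ m ∈ Iphi φ :=
    fun g hg => Subgroup.mem_comap.mp (pow_mem_IphiZ φ hord hg)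
  have hε_pow : ∀ x : ↥(fixedSubgroup φbar), (ε x) ^ m = 1 := by
    rintro ⟨q, hq⟩
    obtain ⟨g, rfl⟩ := QuotientGroup.mk_surjective q
    have hg := inv_mul_apply_mem_center_of_mem_fixedSubgroup φ hbar hq
    rw [hε g hg hq, ← QuotientGroup.mk_pow, QuotientGroup.eq_one_iff]
    exact pow_mem_IphiZ φ hord hg
  open scoped IsMulCommutative in
  exact ⟨hpow, hε_pow, fun _ => ε.finiteIndex_ker_of_pow_eq_one hm hε_pow⟩
end

section
/- Let G be a finitely generated group with finitely generated center and let φ be an automorphism of G of finite order. Then Fix φ is finitely generated if and only if Fix φ̄ is finitely generated. (Case n = 1 of Corollary B.) -/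
/-!
Write `Z` for the centre and `π : G → G ⧸ Z`. Restricted to `Fix φ`, the kernel of `π` is
`Fix φ ⊓ Z`, finitely generated as a subgroup of the finitely generated abelian group `Z`; so
`Fix φ` is finitely generated iff `π (Fix φ)` is, and it remains to show that `π (Fix φ)` has
finite index in `Fix φ̄ = π H`, where `H = {g | φ g ≡ g mod Z}`.
On `H`, `d g = (φ g)⁻¹ g` is a homomorphism to `Z` with kernel `Fix φ`, so
`[H : Fix φ ⊔ Z] = [d H : d Z]`. As `φ z = z (d z)⁻¹` on `Z`, `φ` acts trivially on `Z ⧸ d Z`,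
and iterating gives `(φᵐ g)⁻¹ g ≡ (d g)ᵐ` modulo `d Z`. Hence `d H ⧸ d Z` has exponent dividing
`m`; being finitely generated abelian, it is finite.
-/

open Subgroup
open scoped IsMulCommutative

theorem MulEquiv.groupFG_iff {G H : Type*} [Group G] [Group H] (e : G ≃* H) :
    Group.FG G ↔ Group.FG H :=
  ⟨fun _ => Group.fg_of_surjective (f := e.toMonoidHom) e.surjective,
    fun _ => Group.fg_of_surjective (f := e.symm.toMonoidHom) e.symm.surjective⟩

theorem Subgroup.groupFG_subgroupOf_iff {G : Type*} [Group G] {H K : Subgroup G} (h : H ≤ K) :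
    Group.FG (H.subgroupOf K) ↔ Group.FG H :=
  (subgroupOfEquivOfLe h).groupFG_iff

theorem CommGroup.fg_subgroup {C : Type*} [CommGroup C] [hC : Group.FG C] (A : Subgroup C) :
    Group.FG A := by
  rw [Group.fg_iff_subgroup_fg, Subgroup.fg_iff_add_fg]
  have : Module.Finite ℤ (Additive C) :=
    Module.Finite.iff_addGroup_fg.mpr (GroupFG.iff_add_fg.mp hC)
  have h := IsNoetherian.noetherian (AddSubgroup.toIntSubmodule A.toAddSubgroup)
  rwa [Submodule.fg_iff_addSubgroup_fg, AddSubgroup.toIntSubmodule_toAddSubgroup] at h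

theorem Subgroup.relIndex_ne_zero_of_pow_mem {C : Type*} [CommGroup C] [Group.FG C]
    {A B : Subgroup C} {n : ℕ} (hn : 0 < n) (h : ∀ a ∈ A, a ^ n ∈ B) : B.relIndex A ≠ 0 := by
  have := CommGroup.fg_subgroup A
  have : Finite (A ⧸ B.subgroupOf A) := by
    refine CommGroup.finite_of_fg_isMulTorsion _ fun x => ?_
    induction x using QuotientGroup.induction_on with | H a => ?_
    refine isOfFinOrder_iff_pow_eq_one.mpr ⟨n, hn, ?_⟩
    rw [← QuotientGroup.mk_pow, QuotientGroup.eq_one_iff, mem_subgroupOf]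
    exact h a a.2
  exact index_ne_zero_of_finite

theorem Group.fg_of_surjective_of_fg_ker {G Q : Type*} [Group G] [Group Q] [hQ : Group.FG Q]
    {f : G →* Q} (hf : Function.Surjective f) (hker : Group.FG f.ker) : Group.FG G := by
  classical
  obtain ⟨T, hT⟩ := hQ.out
  let S : Finset G := T.image (Function.surjInv hf)
  have hS : (closure (S : Set G)).map f = ⊤ := by
    rw [MonoidHom.map_closure, ← hT, Finset.coe_image, ← Set.image_comp,
      Function.comp_def]
    simp only [Function.surjInv_eq hf, Set.image_id']
  rw [Group.fg_def, ← comap_top f, ← hS, comap_map_eq]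
  exact FG.sup ⟨S, rfl⟩ ((Group.fg_iff_subgroup_fg _).mp hker)

theorem Group.fg_of_fg_of_index_ne_zero {G : Type*} [Group G] {H : Subgroup G}
    (hH : H.index ≠ 0) [Group.FG H] : Group.FG G := by
  have : H.FiniteIndex := ⟨hH⟩
  have hN : Group.FG H.normalCore :=
    (groupFG_subgroupOf_iff H.normalCore_le).mp (fg_of_index_ne_zero _)
  exact fg_of_surjective_of_fg_ker (QuotientGroup.mk'_surjective H.normalCore)
    (by rwa [QuotientGroup.ker_mk'])

theorem Subgroup.fg_iff_map_fg {G Q : Type*} [Group G] [Group Q] (f : G →* Q) {H : Subgroup G}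
    (hker : Group.FG (f.ker ⊓ H : Subgroup G)) : Group.FG H ↔ Group.FG (H.map f) := by
  refine ⟨fun _ => Group.fg_of_surjective (f.subgroupMap_surjective H), fun _ => ?_⟩
  refine Group.fg_of_surjective_of_fg_ker (f.subgroupMap_surjective H) ?_
  rwa [ker_subgroupMap, ← inf_subgroupOf_right, groupFG_subgroupOf_iff inf_le_right]

theorem Subgroup.fg_iff_of_relIndex_ne_zero {G : Type*} [Group G] {H K : Subgroup G} (hHK : H ≤ K)
    (h : H.relIndex K ≠ 0) : Group.FG H ↔ Group.FG K := by
  have : (H.subgroupOf K).FiniteIndex := ⟨h⟩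
  rw [← groupFG_subgroupOf_iff hHK]
  exact ⟨fun _ => Group.fg_of_fg_of_index_ne_zero h, fun _ => fg_of_index_ne_zero _⟩

section fixedModCenter

variable {G : Type*} [Group G] (φ : G ≃* G)

def fixedModCenter : Subgroup G :=
  ((QuotientGroup.mk' (center G)).comp φ.toMonoidHom).eqLocus (QuotientGroup.mk' (center G))

variable {φ}

theorem mem_fixedModCenter_iff {g : G} : g ∈ fixedModCenter φ ↔ (φ g)⁻¹ * g ∈ center G :=
  QuotientGroup.eq

theorem fixedSubgroup_le_fixedModCenter : fixedSubgroup φ ≤ fixedModCenter φ := fun g hg => by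
  rw [mem_fixedModCenter_iff, hg, inv_mul_cancel]
  exact one_mem _

theorem center_le_fixedModCenter : center G ≤ fixedModCenter φ := fun z hz => by
  rw [mem_fixedModCenter_iff]
  exact mul_mem (inv_mem ((centerCharacteristic.fixed φ).ge hz)) hz

variable {φbar : (G ⧸ center G) ≃* (G ⧸ center G)}

theorem comap_fixedSubgroup_eq_fixedModCenter
    (hbar : ∀ g : G, φbar (QuotientGroup.mk g) = QuotientGroup.mk (φ g)) :
    (fixedSubgroup φbar).comap (QuotientGroup.mk' (center G)) = fixedModCenter φ := by
  ext g
  change φbar g = g ↔ ((φ g : G) : G ⧸ center G) = g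
  rw [hbar]

variable (φ)

def centralDefect : fixedModCenter φ →* center G where
  toFun g := ⟨(φ g)⁻¹ * g, mem_fixedModCenter_iff.mp g.2⟩
  map_one' := by ext; simp
  map_mul' a b := by
    have ha := mem_center_iff.mp (mem_fixedModCenter_iff.mp a.2)
    ext
    change (φ (a * b : G))⁻¹ * (a * b) = (φ a)⁻¹ * a * ((φ b)⁻¹ * b)
    calc (φ (a * b : G))⁻¹ * (a * b) = (φ b)⁻¹ * ((φ a)⁻¹ * a) * b := by rw [map_mul]; group
      _ = (φ a)⁻¹ * a * ((φ b)⁻¹ * b) := by rw [ha]; group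

variable {φ}

@[simp]
theorem coe_centralDefect (g : fixedModCenter φ) : (centralDefect φ g : G) = (φ g)⁻¹ * g := rfl

theorem ker_centralDefect :
    (centralDefect φ).ker = (fixedSubgroup φ).subgroupOf (fixedModCenter φ) := by
  ext g
  rw [MonoidHom.mem_ker, mem_subgroupOf, Subtype.ext_iff, coe_centralDefect, OneMemClass.coe_one,
    inv_mul_eq_one]
  rfl

variable (φ) in
def centerDefect : Subgroup (center G) :=
  ((center G).subgroupOf (fixedModCenter φ)).map (centralDefect φ)

theorem exists_coe_eq_inv_iterate_mul (g : fixedModCenter φ) (k : ℕ) :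
    ∃ w : center G, (w : G) = ((⇑φ)^[k] g)⁻¹ * g ∧
      (w : center G ⧸ centerDefect φ) = (centralDefect φ g : center G ⧸ centerDefect φ) ^ k := by
  induction k with
  | zero => exact ⟨1, by simp, by simp⟩
  | succ k ih =>
    obtain ⟨w, hw, hwq⟩ := ih
    let w' : fixedModCenter φ := ⟨w, center_le_fixedModCenter w.2⟩
    have hw' : centralDefect φ w' ∈ centerDefect φ := mem_map_of_mem _ (mem_subgroupOf.mpr w.2)
    refine ⟨w * (centralDefect φ w')⁻¹ * centralDefect φ g, ?_, ?_⟩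
    · calc ((w * (centralDefect φ w')⁻¹ * centralDefect φ g : center G) : G)
          = w * ((φ w)⁻¹ * w)⁻¹ * ((φ g)⁻¹ * g) := rfl
        _ = φ w * (φ g)⁻¹ * g := by group
        _ = ((⇑φ)^[k + 1] g)⁻¹ * g := by
          rw [hw, map_mul, map_inv, ← Function.iterate_succ_apply' φ]
          group
    · rw [QuotientGroup.mk_mul, QuotientGroup.mk_mul, hwq, QuotientGroup.mk_inv,
        (QuotientGroup.eq_one_iff _).mpr hw', inv_one, mul_one, pow_succ]

theorem centralDefect_pow_mem_centerDefect {m : ℕ} (hord : ∀ g : G, (⇑φ)^[m] g = g)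
    (g : fixedModCenter φ) : centralDefect φ g ^ m ∈ centerDefect φ := by
  obtain ⟨w, hw, hwq⟩ := exists_coe_eq_inv_iterate_mul g m
  rw [hord, inv_mul_cancel, ← coe_one, SetLike.coe_eq_coe] at hw
  rw [← QuotientGroup.eq_one_iff, QuotientGroup.mk_pow, ← hwq, hw, QuotientGroup.mk_one]

theorem relIndex_sup_center_fixedModCenter_ne_zero [Group.FG (center G)] {m : ℕ} (hm : 0 < m)
    (hord : ∀ g : G, (⇑φ)^[m] g = g) :
    (fixedSubgroup φ ⊔ center G).relIndex (fixedModCenter φ) ≠ 0 := by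
  rw [relIndex, subgroupOf_sup fixedSubgroup_le_fixedModCenter center_le_fixedModCenter,
    ← ker_centralDefect, sup_comm, ← comap_map_eq, index_comap]
  exact relIndex_ne_zero_of_pow_mem hm (by
    rintro _ ⟨g, rfl⟩
    exact centralDefect_pow_mem_centerDefect hord g)

theorem map_fixedModCenter_eq
    (hbar : ∀ g : G, φbar (QuotientGroup.mk g) = QuotientGroup.mk (φ g)) :
    (fixedModCenter φ).map (QuotientGroup.mk' (center G)) = fixedSubgroup φbar := by
  rw [← comap_fixedSubgroup_eq_fixedModCenter hbar,
    map_comap_eq_self_of_surjective (QuotientGroup.mk'_surjective _)]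

theorem map_fixedSubgroup_le
    (hbar : ∀ g : G, φbar (QuotientGroup.mk g) = QuotientGroup.mk (φ g)) :
    (fixedSubgroup φ).map (QuotientGroup.mk' (center G)) ≤ fixedSubgroup φbar := by
  rw [← map_fixedModCenter_eq hbar]
  exact map_mono fixedSubgroup_le_fixedModCenter

theorem relIndex_map_fixedSubgroup_ne_zero [Group.FG (center G)]
    (hbar : ∀ g : G, φbar (QuotientGroup.mk g) = QuotientGroup.mk (φ g)) {m : ℕ} (hm : 0 < m)
    (hord : ∀ g : G, (⇑φ)^[m] g = g) :
    ((fixedSubgroup φ).map (QuotientGroup.mk' (center G))).relIndex (fixedSubgroup φbar) ≠ 0 := by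
  rw [← map_fixedModCenter_eq hbar, relIndex_map_map, QuotientGroup.ker_mk',
    sup_eq_left.mpr center_le_fixedModCenter]
  exact relIndex_sup_center_fixedModCenter_ne_zero hm hord

end fixedModCenter

theorem fixed_fg_iff_fixedBar_fg_of_finite_order_general {G : Type*} [Group G]
    (hZ : Group.FG ↥(Subgroup.center G)) (φ : G ≃* G)
    (m : ℕ) (hm : 1 ≤ m) (hord : ∀ g : G, (⇑φ)^[m] g = g)
    (φbar : (G ⧸ Subgroup.center G) ≃* (G ⧸ Subgroup.center G))
    (hbar : ∀ g : G, φbar (QuotientGroup.mk g) = QuotientGroup.mk (φ g)) :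
    Group.FG ↥(fixedSubgroup φ) ↔ Group.FG ↥(fixedSubgroup φbar) := by
  have hker : Group.FG ((QuotientGroup.mk' (center G)).ker ⊓ fixedSubgroup φ : Subgroup G) := by
    rw [QuotientGroup.ker_mk', ← groupFG_subgroupOf_iff inf_le_left]
    exact CommGroup.fg_subgroup ((center G ⊓ fixedSubgroup φ).subgroupOf (center G))
  rw [fg_iff_map_fg _ hker, fg_iff_of_relIndex_ne_zero (map_fixedSubgroup_le hbar)
    (relIndex_map_fixedSubgroup_ne_zero hbar hm hord)]

/-- (Corollary B with n = 1.) For a finitely generated group `G` with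
finitely generated center and an automorphism `φ` of finite order, `Fix φ` is finitely
generated iff `Fix φ̄` is finitely generated. -/
theorem fixed_fg_iff_fixedBar_fg_of_finite_order {G : Type*} [Group G]
    (hG : Group.FG G) (hZ : Group.FG ↥(Subgroup.center G)) (φ : G ≃* G)
    (m : ℕ) (hm : 1 ≤ m) (hord : ∀ g : G, (⇑φ)^[m] g = g)
    (φbar : (G ⧸ Subgroup.center G) ≃* (G ⧸ Subgroup.center G))
    (hbar : ∀ g : G, φbar (QuotientGroup.mk g) = QuotientGroup.mk (φ g)) :
    Group.FG ↥(fixedSubgroup φ) ↔ Group.FG ↥(fixedSubgroup φbar) :=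
  fixed_fg_iff_fixedBar_fg_of_finite_order_general hZ φ m hm hord φbar hbar
end

section
/- Let G be a finitely generated group with finitely generated center. Then G has property FGFPa if and only if for every group homomorphism ν : G/Z(G) → Z(G) and every automorphism φ of G, the kernel of the homomorphism θ : Fix φ̄ → Z(G)/I_φ defined by θ(gZ(G)) = g⁻¹·φ(g)·ν(gZ(G))·I_φ is finitely generated. (Case n = 1 of Theorem B of the paper.) -/
/-- A group `G` has property FGFPa if the fixed subgroup of every automorphism of `G`
is finitely generated. -/
def FGFPa (G : Type*) [Group G] : Prop :=
  ∀ φ : G ≃* G, Group.FG ↥(fixedSubgroup φ)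


open Subgroup QuotientGroup

namespace Subgroup

variable {G G' : Type*} [Group G] [Group G']

theorem FG.map {K : Subgroup G} (hK : K.FG) (f : G →* G') : (K.map f).FG := by
  rw [fg_iff_submonoid_fg] at hK ⊢
  exact hK.map f

theorem fg_map_iff_of_injective {K : Subgroup G} {f : G →* G'} (hf : Function.Injective f) :
    (K.map f).FG ↔ K.FG := by
  refine ⟨fun h => ?_, (·.map f)⟩
  rw [fg_iff_submonoid_fg] at h ⊢
  exact h.map_injective f hf

theorem fg_of_commGroup {C : Type*} [CommGroup C] [Group.FG C] (H : Subgroup C) : H.FG := by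
  have : Module.Finite ℤ (Additive C) :=
    Module.Finite.iff_addGroup_fg.mpr (GroupFG.iff_add_fg.mp ‹_›)
  have h := IsNoetherian.noetherian (AddSubgroup.toIntSubmodule H.toAddSubgroup)
  rwa [Submodule.fg_iff_addSubgroup_fg, AddSubgroup.toIntSubmodule_toAddSubgroup,
    ← fg_iff_add_fg] at h

open scoped IsMulCommutative in
theorem fg_of_le_center (hZ : Group.FG (center G)) {K : Subgroup G} (hK : K ≤ center G) :
    K.FG := by
  rw [← inf_of_le_left hK, ← subgroupOf_map_subtype]
  exact (fg_of_commGroup _).map _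

theorem fg_of_fg_map_of_fg_inf {N H : Subgroup G} [N.Normal] (hmap : (H.map (mk' N)).FG)
    (hinf : (H ⊓ N).FG) : H.FG := by
  obtain ⟨T, hTH, hTfin, hT⟩ :
      ∃ T ⊆ (H : Set G), T.Finite ∧ closure (mk' N '' T) = H.map (mk' N) := by
    obtain ⟨S, hS, hSfin⟩ := (fg_iff _).mp hmap
    refine Set.exists_subset_image_finite_and
      (p := fun T => closure T = H.map (mk' N)) |>.mp ⟨S, ?_, hSfin, hS⟩
    rw [← coe_map, ← hS]
    exact subset_closure
  have hH : closure T ⊔ (H ⊓ N) = H := by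
    refine le_antisymm (sup_le ((closure_le H).mpr hTH) inf_le_left) fun h hh => ?_
    obtain ⟨k, hk, hkh⟩ : ∃ k ∈ closure T, mk' N k = mk' N h := by
      rw [← mem_map, MonoidHom.map_closure, hT]
      exact mem_map_of_mem _ hh
    have hkH : k ∈ H := (closure_le H).mpr hTH hk
    have hkh' : k⁻¹ * h ∈ H ⊓ N := ⟨H.mul_mem (H.inv_mem hkH) hh, QuotientGroup.eq.mp hkh⟩
    simpa using mul_mem_sup hk hkh'
  rw [← hH]
  exact ((fg_iff _).mpr ⟨T, rfl, hTfin⟩).sup hinf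

end Subgroup

section Twist

variable {G : Type*} [Group G]

@[simp]
theorem mem_fixedSubgroup {φ : G ≃* G} {g : G} : g ∈ fixedSubgroup φ ↔ φ g = g :=
  Iff.rfl

def twist (φ : G ≃* G) (ν : G ⧸ center G →* center G) : G ≃* G where
  toFun g := φ g * ν g
  invFun g := φ.symm (g * (ν (φ.symm g : G ⧸ center G) : G)⁻¹)
  left_inv g := by
    simp only [map_mul, MulEquiv.symm_apply_apply,
      mk_mul_of_mem _ (center_apply_mem φ.symm (ν _).2), mul_inv_cancel_right]
  right_inv g := by
    simp only [map_mul, map_inv, MulEquiv.apply_symm_apply,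
      mk_mul_of_mem _ (inv_mem (center_apply_mem φ.symm (ν _).2)), inv_mul_cancel_right]
  map_mul' a b := by
    have hν : φ b * ν a = ν a * φ b := mem_center_iff.mp (ν (a : G ⧸ center G)).2 (φ b)
    simp only [map_mul, QuotientGroup.mk_mul, coe_mul, mul_assoc]
    rw [← mul_assoc (φ b), hν, mul_assoc]

variable (φ : G ≃* G) (ν : G ⧸ center G →* center G)

@[simp]
theorem twist_apply (g : G) : twist φ ν g = φ g * ν g :=
  rfl

@[simp]
theorem twist_one : twist φ 1 = φ := by
  ext g
  simp

theorem twist_apply_of_mem_center {z : G} (hz : z ∈ center G) : twist φ ν z = φ z := by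
  simp [(QuotientGroup.eq_one_iff z).mpr hz]

theorem mk_twist_apply (g : G) : (twist φ ν g : G ⧸ center G) = φ g :=
  mk_mul_of_mem _ (ν _).2

theorem Iphi_twist : Iphi (twist φ ν) = Iphi φ := by
  ext x
  exact exists_congr fun z => and_congr_right fun hz => by rw [twist_apply_of_mem_center φ ν hz]

end Twist

section Theta

variable {G : Type*} [Group G]

theorem inv_mul_apply_mem_Iphi_iff (χ : G ≃* G) (g : G) :
    g⁻¹ * χ g ∈ Iphi χ ↔ (g : G ⧸ center G) ∈ (fixedSubgroup χ).map (mk' (center G)) := by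
  constructor
  · rintro ⟨z, hz, hgz⟩
    refine ⟨g * z⁻¹, ?_, mk_mul_of_mem _ (inv_mem hz)⟩
    rw [SetLike.mem_coe, mem_fixedSubgroup, map_mul, map_inv, ← mul_inv_cancel_left g (χ g), hgz]
    group
  · rintro ⟨h, hh, hhg⟩
    refine ⟨h⁻¹ * g, QuotientGroup.eq.mp hhg, ?_⟩
    rw [map_mul, map_inv, mem_fixedSubgroup.mp hh]
    group

variable {φ : G ≃* G} {φbar : (G ⧸ center G) ≃* (G ⧸ center G)}
  (hφbar : ∀ g : G, φbar g = φ g) {ν : G ⧸ center G →* center G}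
  {θ : fixedSubgroup φbar →* center G ⧸ IphiZ φ}
  (hθ : ∀ (g : G) (hg : g⁻¹ * φ g ∈ center G) (hmem : (g : G ⧸ center G) ∈ fixedSubgroup φbar),
    θ ⟨g, hmem⟩ = QuotientGroup.mk (⟨g⁻¹ * φ g, hg⟩ * ν g))
include hφbar

theorem inv_mul_apply_mem_center {g : G} (hmem : (g : G ⧸ center G) ∈ fixedSubgroup φbar) :
    g⁻¹ * φ g ∈ center G :=
  QuotientGroup.eq.mp ((hφbar g).symm.trans hmem).symm

theorem map_fixedSubgroup_twist_le :
    (fixedSubgroup (twist φ ν)).map (mk' (center G)) ≤ fixedSubgroup φbar := by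
  rintro _ ⟨h, hh, rfl⟩
  rw [mem_fixedSubgroup, mk'_apply, hφbar, ← mk_twist_apply φ ν, mem_fixedSubgroup.mp hh]

include hθ

theorem theta_eq_one_iff {g : G} (hmem : (g : G ⧸ center G) ∈ fixedSubgroup φbar) :
    θ ⟨g, hmem⟩ = 1 ↔ g⁻¹ * twist φ ν g ∈ Iphi φ := by
  rw [hθ g (inv_mul_apply_mem_center hφbar hmem), QuotientGroup.eq_one_iff, twist_apply,
    ← mul_assoc]
  rfl

theorem map_ker_theta :
    θ.ker.map (fixedSubgroup φbar).subtype = (fixedSubgroup (twist φ ν)).map (mk' (center G)) := by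
  ext x
  obtain ⟨g, rfl⟩ := mk_surjective x
  rw [← inv_mul_apply_mem_Iphi_iff, Iphi_twist]
  constructor
  · rintro ⟨⟨_, hmem⟩, hker, hx⟩
    cases hx
    exact (theta_eq_one_iff hφbar hθ hmem).mp hker
  · intro hg
    have hmem := map_fixedSubgroup_twist_le hφbar
      ((inv_mul_apply_mem_Iphi_iff _ g).mp ((Iphi_twist φ ν).symm ▸ hg))
    exact ⟨⟨g, hmem⟩, (theta_eq_one_iff hφbar hθ hmem).mpr hg, rfl⟩

theorem fg_ker_theta_iff :
    Group.FG θ.ker ↔ ((fixedSubgroup (twist φ ν)).map (mk' (center G))).FG := by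
  rw [Group.fg_iff_subgroup_fg, ← fg_map_iff_of_injective (fixedSubgroup φbar).subtype_injective,
    map_ker_theta hφbar hθ]

end Theta

section Construction

variable {G : Type*} [Group G]

def invMulApplyHom (φ : G ≃* G) (K : Subgroup G) (hK : ∀ k ∈ K, k⁻¹ * φ k ∈ center G) :
    K →* center G where
  toFun k := ⟨k⁻¹ * φ k, hK k k.2⟩
  map_one' := by simp
  map_mul' a b := by
    ext
    simp only [coe_mul, coe_inv, map_mul, mul_inv_rev]
    calc (b : G)⁻¹ * (a : G)⁻¹ * (φ a * φ b) = (b : G)⁻¹ * ((a : G)⁻¹ * φ a) * φ b := by group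
      _ = ((a : G)⁻¹ * φ a) * (b : G)⁻¹ * φ b := by rw [mem_center_iff.mp (hK a a.2)]
      _ = (a : G)⁻¹ * φ a * ((b : G)⁻¹ * φ b) := by group

open scoped IsMulCommutative in
theorem exists_theta (φ : G ≃* G) {φbar : (G ⧸ center G) ≃* (G ⧸ center G)}
    (hφbar : ∀ g : G, φbar g = φ g) (ν : G ⧸ center G →* center G) :
    ∃ θ : fixedSubgroup φbar →* center G ⧸ IphiZ φ,
      ∀ (g : G) (hg : g⁻¹ * φ g ∈ center G) (hmem : (g : G ⧸ center G) ∈ fixedSubgroup φbar),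
        θ ⟨g, hmem⟩ = QuotientGroup.mk (⟨g⁻¹ * φ g, hg⟩ * ν g) := by
  set K := (fixedSubgroup φbar).comap (mk' (center G))
  have hK : ∀ k ∈ K, k⁻¹ * φ k ∈ center G := fun k hk => inv_mul_apply_mem_center hφbar hk
  set Θ := invMulApplyHom φ K hK * ν.comp ((mk' (center G)).comp K.subtype)
  set π := (mk' (center G)).subgroupComap (fixedSubgroup φbar)
  have hπ : Function.Surjective π :=
    (mk' _).subgroupComap_surjective_of_surjective _ (mk'_surjective _)
  have hker : π.ker ≤ ((mk' (IphiZ φ)).comp Θ).ker := by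
    intro k hk
    have hkZ : (k : G) ∈ center G := (QuotientGroup.eq_one_iff _).mp (congrArg Subtype.val hk)
    have hνk : ν (k : G) = 1 := by rw [(QuotientGroup.eq_one_iff _).mpr hkZ, map_one]
    rw [MonoidHom.mem_ker, MonoidHom.comp_apply, mk'_apply, QuotientGroup.eq_one_iff]
    show _ * ν (k : G) ∈ IphiZ φ
    rw [hνk, mul_one]
    exact ⟨k, hkZ, rfl⟩
  exact ⟨π.liftOfSurjective hπ ⟨_, hker⟩, fun g _ hmem =>
    π.liftOfRightInverse_comp_apply _ _ ⟨_, hker⟩ ⟨g, hmem⟩⟩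

end Construction

theorem FGFPa_iff_ker_theta_fg_general {G : Type*} [Group G]
    (hZ : Group.FG ↥(Subgroup.center G)) :
    FGFPa G ↔
      ∀ (φ : G ≃* G)
        (φbar : (G ⧸ Subgroup.center G) ≃* (G ⧸ Subgroup.center G)),
        (∀ g : G, φbar (QuotientGroup.mk g) = QuotientGroup.mk (φ g)) →
        ∀ (ν : (G ⧸ Subgroup.center G) →* ↥(Subgroup.center G))
          (θ : ↥(fixedSubgroup φbar) →* (↥(Subgroup.center G) ⧸ IphiZ φ)),
          (∀ (g : G) (hg : g⁻¹ * φ g ∈ Subgroup.center G)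
            (hmem : (QuotientGroup.mk g : G ⧸ Subgroup.center G) ∈ fixedSubgroup φbar),
            θ ⟨QuotientGroup.mk g, hmem⟩ =
              QuotientGroup.mk
                ((⟨g⁻¹ * φ g, hg⟩ : ↥(Subgroup.center G)) * ν (QuotientGroup.mk g))) →
          Group.FG ↥(MonoidHom.ker θ) := by
  constructor
  · intro hfix φ φbar hφbar ν θ hθ
    rw [fg_ker_theta_iff hφbar hθ]
    exact ((Group.fg_iff_subgroup_fg _).mp (hfix _)).map _
  · intro hker φ
    have hφbar : ∀ g : G, congr (center G) (center G) φ
        ((characteristic_iff_map_eq.mp inferInstance) φ) g = φ g := fun _ => rfl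
    obtain ⟨θ, hθ⟩ := exists_theta φ hφbar 1
    have hmap := (fg_ker_theta_iff hφbar hθ).mp (hker φ _ hφbar 1 θ hθ)
    rw [twist_one] at hmap
    rw [Group.fg_iff_subgroup_fg]
    exact fg_of_fg_map_of_fg_inf hmap (fg_of_le_center hZ inf_le_right)

/-- (Theorem B with n = 1.) A finitely generated group `G` with
finitely generated center has FGFPa iff for every homomorphism `ν : G/Z(G) → Z(G)` and
every automorphism `φ` of `G`, the kernel of
`θ : Fix φ̄ → Z(G)/I_φ`, `gZ(G) ↦ g⁻¹·φ(g)·ν(gZ(G))·I_φ`, is finitely generated. -/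
theorem FGFPa_iff_ker_theta_fg {G : Type*} [Group G]
    (hG : Group.FG G) (hZ : Group.FG ↥(Subgroup.center G)) :
    FGFPa G ↔
      ∀ (φ : G ≃* G)
        (φbar : (G ⧸ Subgroup.center G) ≃* (G ⧸ Subgroup.center G)),
        (∀ g : G, φbar (QuotientGroup.mk g) = QuotientGroup.mk (φ g)) →
        ∀ (ν : (G ⧸ Subgroup.center G) →* ↥(Subgroup.center G))
          (θ : ↥(fixedSubgroup φbar) →* (↥(Subgroup.center G) ⧸ IphiZ φ)),
          (∀ (g : G) (hg : g⁻¹ * φ g ∈ Subgroup.center G)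
            (hmem : (QuotientGroup.mk g : G ⧸ Subgroup.center G) ∈ fixedSubgroup φbar),
            θ ⟨QuotientGroup.mk g, hmem⟩ =
              QuotientGroup.mk
                ((⟨g⁻¹ * φ g, hg⟩ : ↥(Subgroup.center G)) * ν (QuotientGroup.mk g))) →
          Group.FG ↥(MonoidHom.ker θ) :=
  FGFPa_iff_ker_theta_fg_general hZ
end

section
/- Let H be a group with trivial center and A a finitely generated abelian group (written multiplicatively). Then every automorphism φ of H × A has the form φ(h, a) = (ψ(h), α(h)·γ(a)) for all (h, a) ∈ H × A, where ψ is an automorphism of H, γ is an automorphism of A, and α : H → A is a group homomorphism. -/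
/-- Every automorphism of `H × A`, with `H` centerless and `A`
finitely generated abelian, has the form `φ(h,a) = (ψ(h), α(h)·γ(a))`. -/
theorem automorphism_of_product_form {H A : Type*} [Group H] [CommGroup A]
    (hH : Subgroup.center H = ⊥) (hA : Group.FG A)
    (φ : (H × A) ≃* (H × A)) :
    ∃ (ψ : H ≃* H) (γ : A ≃* A) (α : H →* A),
      ∀ (h : H) (a : A), φ (h, a) = (ψ h, α h * γ a) := by
  have key : ∀ (f : (H × A) ≃* (H × A)) (a : A), (f (1, a)).1 = 1 := by
    intro f a
    have hcen : ∀ g : H × A, g * f (1, a) = f (1, a) * g := by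
      intro g
      have h1 : ∀ x : H × A, x * ((1 : H), a) = ((1 : H), a) * x := by
        intro x; ext <;> simp [mul_comm]
      calc g * f (1, a) = f (f.symm g * (1, a)) := by simp
        _ = f ((1, a) * f.symm g) := by rw [h1]
        _ = f (1, a) * g := by simp
    have hx : (f (1, a)).1 ∈ Subgroup.center H := by
      rw [Subgroup.mem_center_iff]
      intro g
      exact congrArg Prod.fst (hcen (g, 1))
    rw [hH, Subgroup.mem_bot] at hx
    exact hx
  set ψf : H → H := fun h => (φ (h, 1)).1 with hψf
  set αf : H → A := fun h => (φ (h, 1)).2 with hαf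
  set γf : A → A := fun a => (φ (1, a)).2 with hγf
  set ψ'f : H → H := fun h => (φ.symm (h, 1)).1 with hψ'f
  set γ'f : A → A := fun a => (φ.symm (1, a)).2 with hγ'f
  have split : ∀ h a, φ (h, a) = (ψf h, αf h * γf a) := by
    intro h a
    have hs : φ (h, a) = φ (h, 1) * φ (1, a) := by
      rw [← map_mul]; congr 1 <;> simp
    rw [hs]
    ext
    · simp [ψf, key φ a]
    · simp [αf, γf]
  have split' : ∀ h a, φ.symm (h, a) = (ψ'f h, (φ.symm (h, 1)).2 * γ'f a) := by
    intro h a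
    have hs : φ.symm (h, a) = φ.symm (h, 1) * φ.symm (1, a) := by
      rw [← map_mul]; congr 1 <;> simp
    rw [hs]
    ext
    · simp [ψ'f, key φ.symm a]
    · simp [γ'f]
  have li : ∀ h, ψ'f (ψf h) = h := by
    intro h
    have h1 : φ.symm (φ (h, 1)) = (h, 1) := φ.symm_apply_apply _
    rw [split h 1, split' (ψf h) (αf h * γf 1)] at h1
    simpa using congrArg Prod.fst h1
  have ri : ∀ h, ψf (ψ'f h) = h := by
    intro h
    have h1 : φ (φ.symm (h, 1)) = (h, 1) := φ.apply_symm_apply _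
    rw [split' h 1, split (ψ'f h) _] at h1
    simpa using congrArg Prod.fst h1
  have gli : ∀ a, γ'f (γf a) = a := by
    intro a
    have h1 : φ.symm (φ (1, a)) = (1, a) := φ.symm_apply_apply _
    have h2 : φ (1, a) = (1, γf a) := by
      ext
      · exact key φ a
      · rfl
    rw [h2, split' 1 (γf a)] at h1
    have h3 := congrArg Prod.snd h1
    have h4 : ((1 : H), (1 : A)) = (1 : H × A) := rfl
    simp only [h4, map_one] at h3
    simpa using h3
  have gri : ∀ a, γf (γ'f a) = a := by
    intro a
    have h1 : φ (φ.symm (1, a)) = (1, a) := φ.apply_symm_apply _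
    have h2 : φ.symm (1, a) = (1, γ'f a) := by
      ext
      · exact key φ.symm a
      · rfl
    rw [h2, split 1 (γ'f a)] at h1
    have h3 := congrArg Prod.snd h1
    have h4 : αf 1 = 1 := by
      have : ((1 : H), (1 : A)) = (1 : H × A) := rfl
      simp [αf, this]
    rw [h4, one_mul] at h3
    exact h3
  have ψmul : ∀ x y, ψf (x * y) = ψf x * ψf y := by
    intro x y
    have e : ((x * y : H), (1 : A)) = (x, 1) * (y, 1) := by ext <;> simp
    show (φ (x * y, 1)).1 = (φ (x, 1)).1 * (φ (y, 1)).1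
    rw [e, map_mul]; rfl
  have γmul : ∀ x y, γf (x * y) = γf x * γf y := by
    intro x y
    have e : ((1 : H), x * y) = ((1 : H), x) * ((1 : H), y) := by ext <;> simp
    show (φ (1, x * y)).2 = (φ (1, x)).2 * (φ (1, y)).2
    rw [e, map_mul]; rfl
  have αmul : ∀ x y, αf (x * y) = αf x * αf y := by
    intro x y
    have e : ((x * y : H), (1 : A)) = (x, 1) * (y, 1) := by ext <;> simp
    show (φ (x * y, 1)).2 = (φ (x, 1)).2 * (φ (y, 1)).2
    rw [e, map_mul]; rfl
  have αone : αf 1 = 1 := by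
    have : ((1 : H), (1 : A)) = (1 : H × A) := rfl
    simp [αf, this]
  exact ⟨⟨⟨ψf, ψ'f, li, ri⟩, ψmul⟩, ⟨⟨γf, γ'f, gli, gri⟩, γmul⟩,
    ⟨⟨αf, αone⟩, αmul⟩, split⟩
end

section
/- Let H be a finitely generated group with trivial center, A a finitely generated abelian group, and φ the automorphism of H × A given by φ(h, a) = (ψ(h), α(h)·γ(a)), where ψ is an automorphism of H, γ is an automorphism of A, and α : H → A is a homomorphism. Then Fix φ is finitely generated if and only if both Fix ψ and the subgroup P_φ = {h ∈ Fix ψ | ∃ a ∈ A, α(h) = γ(a)·a⁻¹} are finitely generated. -/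
/-- The subgroup `P_φ = {h ∈ Fix ψ | ∃ a ∈ A, α(h) = γ(a)·a⁻¹}` of `H`. -/
def Pdp {H A : Type*} [Group H] [CommGroup A] (ψ : H ≃* H) (γ : A ≃* A)
    (α : H →* A) : Subgroup H where
  carrier := {h | ψ h = h ∧ ∃ a : A, α h = γ a * a⁻¹}
  one_mem' := ⟨map_one ψ, 1, by simp⟩
  mul_mem' := by
    rintro x y ⟨hx, a, ha⟩ ⟨hy, b, hb⟩
    refine ⟨by rw [map_mul, hx, hy], a * b, ?_⟩
    rw [map_mul, ha, hb, map_mul, mul_inv]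
    exact mul_mul_mul_comm _ _ _ _
  inv_mem' := by
    rintro x ⟨hx, a, ha⟩
    refine ⟨by rw [map_inv, hx], a⁻¹, ?_⟩
    rw [map_inv, ha, map_inv, inv_inv, mul_inv, inv_inv]

/-!
Projecting `Fix φ` onto `H` gives a homomorphism onto `P_φ` whose kernel embeds in `A`; since
subgroups of finitely generated abelian groups are finitely generated, `Fix φ` is finitely
generated iff `P_φ` is. Moreover `P_φ` is the kernel of the map `Fix ψ → A ⧸ {γ(a)a⁻¹}` induced
by `α`, whose target is again finitely generated abelian, so `P_φ` finitely generated forces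
`Fix ψ` to be finitely generated.
-/

theorem Subgroup.fg_of_commGroup_fg {A : Type*} [CommGroup A] [Group.FG A] (B : Subgroup A) :
    B.FG := by
  have : Module.Finite ℤ (Additive A) := Module.Finite.iff_addGroup_fg.mpr inferInstance
  rw [Subgroup.fg_iff_add_fg, ← AddSubgroup.toIntSubmodule_toAddSubgroup B.toAddSubgroup,
    ← Submodule.fg_iff_addSubgroup_fg]
  exact IsNoetherian.noetherian _

theorem Group.fg_of_injective_commGroup {G A : Type*} [Group G] [CommGroup A] [Group.FG A]
    {f : G →* A} (hf : Function.Injective f) : Group.FG G :=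
  have := (Group.fg_iff_subgroup_fg f.range).mpr f.range.fg_of_commGroup_fg
  Group.fg_of_surjective (f := (MonoidHom.ofInjective hf).symm.toMonoidHom)
    (MonoidHom.ofInjective hf).symm.surjective

theorem Group.fg_of_fg_ker_of_fg_range {G Q : Type*} [Group G] [Group Q] (f : G →* Q)
    (hker : Group.FG f.ker) (hrange : Group.FG f.range) : Group.FG G := by
  rw [Group.fg_iff_subgroup_fg, Subgroup.fg_iff] at hker hrange
  obtain ⟨S, hS, hSfin⟩ := hker
  obtain ⟨T, hT, hTfin⟩ := hrange
  have hTrange : T ⊆ f '' Set.univ := by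
    rw [Set.image_univ, ← MonoidHom.coe_range, ← hT]
    exact Subgroup.subset_closure
  obtain ⟨T', -, hT'fin, hT'⟩ := Set.exists_subset_image_finite_and.mp ⟨T, hTrange, hTfin, rfl⟩
  refine Group.fg_iff.mpr ⟨S ∪ T', top_unique ?_, hSfin.union hT'fin⟩
  have hker : f.ker ≤ Subgroup.closure (S ∪ T') := hS ▸ Subgroup.closure_mono Set.subset_union_left
  have hmap : (⊤ : Subgroup G).map f ≤ (Subgroup.closure (S ∪ T')).map f := by
    rw [← MonoidHom.range_eq_map, ← hT, hT', ← MonoidHom.map_closure]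
    exact Subgroup.map_mono (Subgroup.closure_mono Set.subset_union_right)
  simpa [hker] using Subgroup.map_le_map_iff'.mp hmap

section

variable {H A : Type*} [Group H] [CommGroup A]

theorem Group.fg_ker_fst_comp_subtype [Group.FG A] (K : Subgroup (H × A)) :
    Group.FG ((MonoidHom.fst H A).comp K.subtype).ker := by
  refine Group.fg_of_injective_commGroup
    (f := (MonoidHom.snd H A).comp (K.subtype.comp (MonoidHom.ker _).subtype)) ?_
  rintro ⟨⟨⟨h₁, a₁⟩, -⟩, hk₁⟩ ⟨⟨⟨h₂, a₂⟩, -⟩, hk₂⟩ (rfl : a₁ = a₂)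
  obtain rfl : h₁ = 1 := hk₁
  obtain rfl : h₂ = 1 := hk₂
  rfl

theorem pdp_subgroupOf_eq_ker (ψ : H ≃* H) (γ : A ≃* A) (α : H →* A) :
    (Pdp ψ γ α).subgroupOf (fixedSubgroup ψ) =
      ((QuotientGroup.mk' (γ.toMonoidHom / MonoidHom.id A).range).comp
        (α.comp (fixedSubgroup ψ).subtype)).ker := by
  ext ⟨h, hψ⟩
  simp only [Subgroup.mem_subgroupOf, MonoidHom.mem_ker, MonoidHom.comp_apply,
    QuotientGroup.mk'_apply, QuotientGroup.eq_one_iff, MonoidHom.mem_range, MonoidHom.div_apply]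
  change (ψ h = h ∧ ∃ a, α h = γ a * a⁻¹) ↔ ∃ a, γ a / a = α h
  simp only [div_eq_mul_inv, @eq_comm _ (γ _ * _)]
  exact and_iff_right hψ

theorem fg_fixedSubgroup_of_fg_pdp [Group.FG A] {ψ : H ≃* H} {γ : A ≃* A} {α : H →* A}
    (h : Group.FG (Pdp ψ γ α)) : Group.FG (fixedSubgroup ψ) := by
  refine Group.fg_of_fg_ker_of_fg_range
    ((QuotientGroup.mk' (γ.toMonoidHom / MonoidHom.id A).range).comp
      (α.comp (fixedSubgroup ψ).subtype)) ?_
    ((Group.fg_iff_subgroup_fg _).mpr (Subgroup.fg_of_commGroup_fg _))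
  have hle : Pdp ψ γ α ≤ fixedSubgroup ψ := fun _ hx ↦ hx.1
  rw [← pdp_subgroupOf_eq_ker]
  exact Group.fg_of_surjective (f := (Subgroup.subgroupOfEquivOfLe hle).symm.toMonoidHom)
    (Subgroup.subgroupOfEquivOfLe hle).symm.surjective

variable {ψ : H ≃* H} {γ : A ≃* A} {α : H →* A} {φ : (H × A) ≃* (H × A)}

theorem map_fst_fixedSubgroup_eq_pdp (hφ : ∀ (h : H) (a : A), φ (h, a) = (ψ h, α h * γ a)) :
    (fixedSubgroup φ).map (MonoidHom.fst H A) = Pdp ψ γ α := by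
  have hmem (h : H) (a : A) : (h, a) ∈ fixedSubgroup φ ↔ ψ h = h ∧ α h * γ a = a := by
    change φ (h, a) = (h, a) ↔ _
    rw [hφ, Prod.ext_iff]
  ext h
  simp only [Subgroup.mem_map, MonoidHom.coe_fst, Prod.exists, exists_and_right, exists_eq_right,
    hmem]
  constructor
  · rintro ⟨a, hψ, ha⟩
    exact ⟨hψ, a⁻¹, by rw [map_inv, inv_inv, mul_comm]; exact eq_mul_inv_of_mul_eq ha⟩
  · rintro ⟨hψ, a, ha⟩
    exact ⟨a⁻¹, hψ, by rw [ha, map_inv, mul_right_comm, mul_inv_cancel, one_mul]⟩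

theorem fg_fixedSubgroup_iff_fg_pdp [Group.FG A]
    (hφ : ∀ (h : H) (a : A), φ (h, a) = (ψ h, α h * γ a)) :
    Group.FG (fixedSubgroup φ) ↔ Group.FG (Pdp ψ γ α) := by
  set f := (MonoidHom.fst H A).comp (fixedSubgroup φ).subtype
  have hrange : f.range = Pdp ψ γ α := by
    rw [MonoidHom.range_comp, Subgroup.range_subtype, map_fst_fixedSubgroup_eq_pdp hφ]
  refine ⟨fun _ ↦ hrange ▸ Group.fg_range f, fun h ↦ ?_⟩
  exact Group.fg_of_fg_ker_of_fg_range f (Group.fg_ker_fst_comp_subtype _) (hrange ▸ h)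

end

theorem fixed_fg_iff_fix_psi_and_Pdp_fg_general {H A : Type*} [Group H] [CommGroup A]
    (hA : Group.FG A)
    (ψ : H ≃* H) (γ : A ≃* A) (α : H →* A) (φ : (H × A) ≃* (H × A))
    (hφ : ∀ (h : H) (a : A), φ (h, a) = (ψ h, α h * γ a)) :
    Group.FG ↥(fixedSubgroup φ) ↔
      (Group.FG ↥(fixedSubgroup ψ) ∧ Group.FG ↥(Pdp ψ γ α)) := by
  rw [fg_fixedSubgroup_iff_fg_pdp hφ]
  exact ⟨fun h ↦ ⟨fg_fixedSubgroup_of_fg_pdp h, h⟩, And.right⟩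

/-- For `φ(h,a) = (ψ(h), α(h)·γ(a))` on `H × A` with `H` finitely
generated centerless and `A` finitely generated abelian, `Fix φ` is finitely generated
iff both `Fix ψ` and `P_φ = {h ∈ Fix ψ | ∃ a, α(h) = γ(a)·a⁻¹}` are finitely
generated. -/
theorem fixed_fg_iff_fix_psi_and_Pdp_fg {H A : Type*} [Group H] [CommGroup A]
    (hHfg : Group.FG H) (hZ : Subgroup.center H = ⊥) (hA : Group.FG A)
    (ψ : H ≃* H) (γ : A ≃* A) (α : H →* A) (φ : (H × A) ≃* (H × A))
    (hφ : ∀ (h : H) (a : A), φ (h, a) = (ψ h, α h * γ a)) :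
    Group.FG ↥(fixedSubgroup φ) ↔
      (Group.FG ↥(fixedSubgroup ψ) ∧ Group.FG ↥(Pdp ψ γ α)) :=
  fixed_fg_iff_fix_psi_and_Pdp_fg_general hA ψ γ α φ hφ
end

section
/- Let H be a finitely generated group with trivial center, A a finitely generated abelian group, and φ the automorphism of H × A given by φ(h, a) = (ψ(h), α(h)·γ(a)), where ψ is an automorphism of H, γ is an automorphism of A, and α : H → A is a homomorphism. If Fix γ is finite, then Fix φ is finitely generated if and only if Fix ψ is finitely generated. -/
theorem LinearMap.isTorsion_quotient_range_of_isTorsion_ker {R M : Type*} [CommRing R]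
    [IsDomain R] [AddCommGroup M] [Module R M] [Module.Finite R M] (f : M →ₗ[R] M)
    (hker : Module.IsTorsion R (LinearMap.ker f)) : Module.IsTorsion R (M ⧸ LinearMap.range f) := by
  have hrange : Module.finrank R (LinearMap.range f) = Module.finrank R M := by
    rw [← f.quotKerEquivRange.finrank_eq, ← (LinearMap.ker f).finrank_quotient_add_finrank,
      hker.finrank_eq_zero, add_zero]
  have h := (LinearMap.range f).finrank_quotient_add_finrank
  rw [hrange, Nat.add_eq_right] at h
  exact (Module.finrank_eq_zero_iff_isTorsion).1 h

theorem AddMonoidHom.finiteIndex_range_of_finite_ker {A : Type*} [AddCommGroup A] [AddGroup.FG A]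
    (δ : A →+ A) [Finite δ.ker] : δ.range.FiniteIndex := by
  have : Module.Finite ℤ A := Module.Finite.iff_addGroup_fg.2 ‹_›
  have : Finite (LinearMap.ker δ.toIntLinearMap) := ‹Finite δ.ker›
  have : Finite (A ⧸ δ.range) :=
    Module.finite_of_fg_torsion (A ⧸ LinearMap.range δ.toIntLinearMap) <|
      δ.toIntLinearMap.isTorsion_quotient_range_of_isTorsion_ker <|
        isAddTorsion_iff_isTorsion_int.1 isAddTorsion_of_finite
  exact AddSubgroup.finiteIndex_of_finite_quotient

theorem MonoidHom.finiteIndex_range_of_finite_ker {A : Type*} [CommGroup A] [Group.FG A]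
    (δ : A →* A) [Finite δ.ker] : δ.range.FiniteIndex := by
  have : Finite (MonoidHom.toAdditive δ).ker := ‹Finite δ.ker›
  rw [← Subgroup.finiteIndex_toAddSubgroup_iff, ← MonoidHom.coe_toAdditive_range]
  exact (MonoidHom.toAdditive δ).finiteIndex_range_of_finite_ker

theorem fixedSubgroup_eq_ker_id_div {A : Type*} [CommGroup A] (γ : A ≃* A) :
    fixedSubgroup γ = (MonoidHom.id A / γ.toMonoidHom).ker := by
  ext a
  change γ a = a ↔ a / γ a = 1
  rw [div_eq_one, eq_comm]

section SkewProduct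

variable {H A : Type*} [Group H] [CommGroup A] {ψ : H ≃* H} {γ : A ≃* A} {α : H →* A}
  {φ : (H × A) ≃* (H × A)}

theorem mem_fixedSubgroup_iff_of_skewProduct (hφ : ∀ h a, φ (h, a) = (ψ h, α h * γ a))
    (x : H × A) : x ∈ fixedSubgroup φ ↔ ψ x.1 = x.1 ∧ α x.1 * γ x.2 = x.2 := by
  obtain ⟨h, a⟩ := x
  change φ (h, a) = (h, a) ↔ _
  rw [hφ, Prod.mk.injEq]

variable (ψ γ α) in
def liftObstruction : fixedSubgroup ψ →* A ⧸ (MonoidHom.id A / γ.toMonoidHom).range :=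
  (QuotientGroup.mk' _).comp (α.comp (fixedSubgroup ψ).subtype)

def fixedFst (hφ : ∀ h a, φ (h, a) = (ψ h, α h * γ a)) : fixedSubgroup φ →* fixedSubgroup ψ :=
  ((MonoidHom.fst H A).comp (fixedSubgroup φ).subtype).codRestrict _ fun x ↦
    ((mem_fixedSubgroup_iff_of_skewProduct hφ x).1 x.2).1

variable (hφ : ∀ h a, φ (h, a) = (ψ h, α h * γ a))

theorem finite_ker_fixedFst [Finite (fixedSubgroup γ)] : Finite (fixedFst hφ).ker := by
  have fst_eq_one (x : (fixedFst hφ).ker) : x.1.1.1 = 1 := congrArg Subtype.val x.2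
  refine Finite.of_injective (β := fixedSubgroup γ) (fun x ↦ ⟨x.1.1.2, ?_⟩) fun x y hxy ↦ ?_
  · have hx := ((mem_fixedSubgroup_iff_of_skewProduct hφ _).1 x.1.2).2
    rwa [fst_eq_one, map_one, one_mul] at hx
  · exact Subtype.ext <| Subtype.ext <|
      Prod.ext ((fst_eq_one x).trans (fst_eq_one y).symm) (congrArg Subtype.val hxy)

theorem range_fixedFst : (fixedFst hφ).range = (liftObstruction ψ γ α).ker := by
  ext ⟨h, hh⟩
  simp only [MonoidHom.mem_range, MonoidHom.mem_ker, liftObstruction, MonoidHom.comp_apply]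
  rw [QuotientGroup.mk'_apply, QuotientGroup.eq_one_iff]
  constructor
  · rintro ⟨⟨⟨h', a⟩, hx⟩, hx'⟩
    obtain rfl : h' = h := congrArg Subtype.val hx'
    exact ⟨a, div_eq_iff_eq_mul.2 ((mem_fixedSubgroup_iff_of_skewProduct hφ _).1 hx).2.symm⟩
  · rintro ⟨a, ha⟩
    exact ⟨⟨(h, a), (mem_fixedSubgroup_iff_of_skewProduct hφ _).2
      ⟨hh, (div_eq_iff_eq_mul.1 ha).symm⟩⟩, rfl⟩

end SkewProduct

theorem fixed_fg_iff_of_fix_gamma_finite_general {H A : Type*} [Group H] [CommGroup A]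
    (hA : Group.FG A)
    (ψ : H ≃* H) (γ : A ≃* A) (α : H →* A) (φ : (H × A) ≃* (H × A))
    (hφ : ∀ (h : H) (a : A), φ (h, a) = (ψ h, α h * γ a))
    (hfin : Finite ↥(fixedSubgroup γ)) :
    Group.FG ↥(fixedSubgroup φ) ↔ Group.FG ↥(fixedSubgroup ψ) := by
  have : Finite (MonoidHom.id A / γ.toMonoidHom).ker := fixedSubgroup_eq_ker_id_div γ ▸ hfin
  have := (MonoidHom.id A / γ.toMonoidHom).finiteIndex_range_of_finite_ker
  have := finite_ker_fixedFst hφ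
  constructor <;> intro _
  · refine Group.fg_of_fg_ker_of_fg_range (liftObstruction ψ γ α) ?_ inferInstance
    rw [← range_fixedFst hφ]
    infer_instance
  · refine Group.fg_of_fg_ker_of_fg_range (fixedFst hφ) inferInstance ?_
    rw [range_fixedFst hφ]
    infer_instance

/-- For `φ(h,a) = (ψ(h), α(h)·γ(a))` on `H × A` with `Fix γ` finite,
`Fix φ` is finitely generated iff `Fix ψ` is finitely generated. -/
theorem fixed_fg_iff_of_fix_gamma_finite {H A : Type*} [Group H] [CommGroup A]
    (hHfg : Group.FG H) (hZ : Subgroup.center H = ⊥) (hA : Group.FG A)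
    (ψ : H ≃* H) (γ : A ≃* A) (α : H →* A) (φ : (H × A) ≃* (H × A))
    (hφ : ∀ (h : H) (a : A), φ (h, a) = (ψ h, α h * γ a))
    (hfin : Finite ↥(fixedSubgroup γ)) :
    Group.FG ↥(fixedSubgroup φ) ↔ Group.FG ↥(fixedSubgroup ψ) :=
  fixed_fg_iff_of_fix_gamma_finite_general hA ψ γ α φ hφ hfin
end

section
/- Let F be a free group of rank 2 and let H = (F × F) ⋊ C₂ be the wreath product F ≀ C₂, where the nontrivial element of the cyclic group C₂ of order 2 acts on F × F by swapping the two coordinates. Then H × ℤ does not have property FGFPa: there exists an automorphism φ of H × ℤ whose fixed subgroup Fix φ is not finitely generated. (Together with the previous statement, this answers the question of Lei, Ma and Zhang in the negative: FGFPa of H together with finite generation of H' does not imply FGFPa of H × ℤ.) -/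
/-- The free group of rank 2. -/
abbrev F₂ : Type := FreeGroup (Fin 2)

/-- The cyclic group of order 2, written multiplicatively. -/
abbrev C₂ : Type := Multiplicative (ZMod 2)

/-!
Let `σ` be the swap in `H = (F × F) ⋊ C₂` and let `e : F → ℤ` be a homomorphism. The map
`(h, z) ↦ (σ h σ⁻¹, z + e f₁ + e f₂)`, where `h = ((f₁, f₂), c)`, is an automorphism of `H × ℤ`.
It fixes `(h, z)` exactly when `h` commutes with `σ`, i.e. `f₁ = f₂ = f`, and `2 e f = 0`,
i.e. `f ∈ ker e`. On these elements `(h, z) ↦ f` is a homomorphism, so `Fix` maps onto `ker e`.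
For `F = F₂ = ⟨a, b⟩` and `e` the exponent sum of `a`, the kernel is not finitely generated:
the homomorphism `F₂ → ℤ ≀ ℤ`, `a ↦ t`, `b ↦ δ₀` sends `aⁿ b a⁻ⁿ ↦ δₙ`, so it maps `ker e` onto
the base group `⨁_ℤ ℤ`, which has infinite rank.
-/

open Multiplicative SemidirectProduct

namespace Lamplighter

noncomputable def shift : Multiplicative ℤ →* MulAut (Multiplicative (ℤ →₀ ℤ)) where
  toFun n := AddEquiv.toMultiplicative (Finsupp.domCongr (Equiv.addLeft n.toAdd))
  map_one' := by ext; simp [Equiv.Perm.one_def]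
  map_mul' _ _ := by ext; simp [Equiv.Perm.mul_def]

theorem shift_single (n a b : ℤ) :
    shift (ofAdd n) (ofAdd (Finsupp.single a b)) = ofAdd (Finsupp.single (n + a) b) := by
  simp [shift]

abbrev IntWrInt : Type := Multiplicative (ℤ →₀ ℤ) ⋊[shift] Multiplicative ℤ

def firstExpSum : F₂ →* Multiplicative ℤ :=
  FreeGroup.lift ![ofAdd 1, 1]

noncomputable def magnus : F₂ →* IntWrInt :=
  FreeGroup.lift ![inr (ofAdd 1), inl (ofAdd (Finsupp.single 0 1))]

theorem rightHom_comp_magnus : rightHom.comp magnus = firstExpSum :=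
  FreeGroup.ext_hom _ _ fun i => by fin_cases i <;> simp [magnus, firstExpSum]

theorem magnus_conj (n : ℤ) :
    magnus (.of 0 ^ n * .of 1 * (.of 0 ^ n)⁻¹) = inl (ofAdd (Finsupp.single n 1)) := by
  have hpow : magnus (.of 0 ^ n) = inr (ofAdd n) := by
    rw [map_zpow]
    simp [magnus, ← map_zpow, ← ofAdd_zsmul]
  have hgen : magnus (.of 1) = inl (ofAdd (Finsupp.single 0 1)) := by simp [magnus]
  rw [map_mul, map_mul, map_inv, hpow, hgen, ← map_inv, ← inl_aut, shift_single, add_zero]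

theorem firstExpSum_conj (n : ℤ) : firstExpSum (.of 0 ^ n * .of 1 * (.of 0 ^ n)⁻¹) = 1 := by
  simp [firstExpSum]

theorem map_ker_firstExpSum_magnus : firstExpSum.ker.map magnus = inl.range := by
  refine le_antisymm ?_ ?_
  · rintro _ ⟨w, hw, rfl⟩
    rw [range_inl_eq_ker_rightHom, MonoidHom.mem_ker, ← MonoidHom.comp_apply,
      rightHom_comp_magnus]
    exact hw
  · suffices h : ∀ f : ℤ →₀ ℤ, inl (ofAdd f) ∈ firstExpSum.ker.map magnus from
      fun _ ⟨f, hf⟩ => hf ▸ h f.toAdd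
    intro f
    induction f using Finsupp.induction_linear with
    | zero => exact one_mem _
    | add f g hf hg =>
      rw [ofAdd_add, map_mul]
      exact mul_mem hf hg
    | single n b =>
      have hsingle : inl (ofAdd (Finsupp.single n 1)) ∈ firstExpSum.ker.map magnus :=
        ⟨_, firstExpSum_conj n, magnus_conj n⟩
      rw [← Finsupp.smul_single_one, ofAdd_zsmul, map_zpow]
      exact zpow_mem hsingle b

theorem not_fg_multiplicative_finsupp (ι : Type*) [Infinite ι] :
    ¬ Group.FG (Multiplicative (ι →₀ ℤ)) := by
  rw [← AddGroup.fg_iff_mul_fg, ← Module.Finite.iff_addGroup_fg]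
  exact Module.not_finite_of_infinite_basis Finsupp.basisSingleOne

theorem not_fg_ker_firstExpSum : ¬ Group.FG firstExpSum.ker := by
  intro h
  have : Group.FG (inl : _ →* IntWrInt).range := by
    rw [← map_ker_firstExpSum_magnus]
    exact Group.fg_of_surjective (magnus.subgroupMap_surjective _)
  have hinl : Function.Injective (inl : _ →* IntWrInt) := inl_injective
  exact not_fg_multiplicative_finsupp ℤ <|
    Group.fg_of_surjective (f := (MonoidHom.ofInjective hinl).symm.toMonoidHom)
      (MulEquiv.surjective _)

end Lamplighter

section Twist

variable {G A : Type*} [Group G] [CommGroup A]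

def twistAut (α : G ≃* G) (χ : G →* A) : G × A ≃* G × A where
  toFun x := (α x.1, x.2 * χ x.1)
  invFun x := (α.symm x.1, x.2 * (χ (α.symm x.1))⁻¹)
  left_inv x := by simp
  right_inv x := by simp
  map_mul' x y := by simp [mul_mul_mul_comm]

theorem mem_fixedSubgroup_twistAut {α : G ≃* G} {χ : G →* A} {x : G × A} :
    x ∈ fixedSubgroup (twistAut α χ) ↔ α x.1 = x.1 ∧ χ x.1 = 1 := by
  change (α x.1, x.2 * χ x.1) = x ↔ _
  rw [Prod.ext_iff, mul_eq_left]

end Twist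

namespace SwapWreath

variable {F A : Type*} [Group F] [CommGroup A] (act : C₂ →* MulAut (F × F))
  (hact : ∀ x : F × F, act (ofAdd 1) x = (x.2, x.1))

include hact in
theorem act_eq_self_or_swap (c : C₂) (x : F × F) : act c x = x ∨ act c x = x.swap := by
  obtain rfl | rfl : c = 1 ∨ c = ofAdd 1 := by decide +revert
  · exact .inl (by simp)
  · exact .inr (hact x)

include hact in
theorem act_apply_diag (c : C₂) (f : F) : act c (f, f) = (f, f) := by
  rcases act_eq_self_or_swap act hact c (f, f) with h | h <;> exact h

def swap : (F × F) ⋊[act] C₂ := inr (ofAdd 1)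

include hact in
theorem conj_swap_eq_self_iff (h : (F × F) ⋊[act] C₂) :
    MulAut.conj (swap act) h = h ↔ h.left.1 = h.left.2 := by
  rw [MulAut.conj_apply, mul_inv_eq_iff_eq_mul, SemidirectProduct.ext_iff]
  simp [swap, mul_comm (ofAdd (1 : ZMod 2)), hact, Prod.ext_iff, eq_comm (a := h.left.2)]

def sumChar (e : F →* A) : (F × F) ⋊[act] C₂ →* A :=
  lift (e.coprod e) 1 fun c => by
    ext x
    rcases act_eq_self_or_swap act hact c x with h | h <;> simp [h, mul_comm]

variable (e : F →* A)

theorem sumChar_apply (h : (F × F) ⋊[act] C₂) :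
    sumChar act hact e h = e h.left.1 * e h.left.2 := by
  simp [sumChar, lift]

def swapTwist : ((F × F) ⋊[act] C₂) × A ≃* ((F × F) ⋊[act] C₂) × A :=
  twistAut (MulAut.conj (swap act)) (sumChar act hact e)

theorem mem_fixedSubgroup_swapTwist_iff [IsMulTorsionFree A] (x : ((F × F) ⋊[act] C₂) × A) :
    x ∈ fixedSubgroup (swapTwist act hact e) ↔
      x.1.left.1 = x.1.left.2 ∧ e x.1.left.1 = 1 := by
  rw [swapTwist, mem_fixedSubgroup_twistAut, conj_swap_eq_self_iff act hact, sumChar_apply]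
  refine and_congr_right fun hdiag => ?_
  rw [← hdiag, ← sq, sq_eq_one]

def fixedFst [IsMulTorsionFree A] : fixedSubgroup (swapTwist act hact e) →* F where
  toFun x := x.1.1.left.1
  map_one' := rfl
  map_mul' x y := by
    have hy := ((mem_fixedSubgroup_swapTwist_iff act hact e y).mp y.2).1
    change x.1.1.left.1 * (act x.1.1.right y.1.1.left).1 = _
    rw [show y.1.1.left = (y.1.1.left.1, y.1.1.left.1) from Prod.ext rfl hy.symm,
      act_apply_diag act hact]

theorem range_fixedFst [IsMulTorsionFree A] : (fixedFst act hact e).range = e.ker := by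
  ext f
  constructor
  · rintro ⟨x, rfl⟩
    exact ((mem_fixedSubgroup_swapTwist_iff act hact e x).mp x.2).2
  · intro hf
    refine ⟨⟨(⟨(f, f), 1⟩, 1), ?_⟩, rfl⟩
    exact (mem_fixedSubgroup_swapTwist_iff act hact e _).mpr ⟨rfl, hf⟩

theorem fg_ker_of_fg_fixedSubgroup_swapTwist [IsMulTorsionFree A]
    [Group.FG (fixedSubgroup (swapTwist act hact e))] : Group.FG e.ker :=
  range_fixedFst act hact e ▸ Group.fg_range _

end SwapWreath

/-- For the wreath product `H = (F₂ × F₂) ⋊ C₂`, the group `H × ℤ`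
does not have FGFPa: some automorphism of `H × ℤ` has a fixed subgroup which is not
finitely generated. -/
theorem wreath_times_int_not_FGFPa (act : C₂ →* MulAut (F₂ × F₂))
    (hact : ∀ x : F₂ × F₂, act (Multiplicative.ofAdd 1) x = (x.2, x.1)) :
    ∃ φ : (((F₂ × F₂) ⋊[act] C₂) × Multiplicative ℤ) ≃*
        (((F₂ × F₂) ⋊[act] C₂) × Multiplicative ℤ),
      ¬ Group.FG ↥(fixedSubgroup φ) :=
  ⟨SwapWreath.swapTwist act hact Lamplighter.firstExpSum, fun _ =>
    Lamplighter.not_fg_ker_firstExpSum <|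
      SwapWreath.fg_ker_of_fg_fixedSubgroup_swapTwist act hact _⟩
end
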